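/- arXiv:2506.15588 — 2 statements merged into one kernel-verified Lean document; each statement's English description precedes it below -/
import Mathlib

section
/- Under the hypotheses of the sampling-without-replacement variance lemma (Σ a_l = 0, S uniform subset of size m), it holds that E‖(1/m) Σ_{l∈S} a_l‖² ≤ (1_{m<n} / (m·n)) Σ_{l=1}^n ‖a_l‖², where 1_{m<n} is 1 if m < n and 0 otherwise. -/
open scoped BigOperators RealInnerProductSpace

lemma count_subsets {α : Type*} [DecidableEq α] (s t : Finset α) (m : ℕ)
    (hts : t ⊆ s) (htm : t.card ≤ m) :
    ((s.powersetCard m).filter (fun S => t ⊆ S)).card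
      = (s.card - t.card).choose (m - t.card) := by
  rw [← Finset.card_sdiff_of_subset hts, ← Finset.card_powersetCard (m - t.card) (s \ t)]
  apply Finset.card_bij' (fun S _ => S \ t) (fun u _ => u ∪ t)
  · intro S hS
    simp only [Finset.mem_filter, Finset.mem_powersetCard] at hS
    obtain ⟨⟨hSs, hScard⟩, htS⟩ := hS
    rw [Finset.mem_powersetCard]
    exact ⟨Finset.sdiff_subset_sdiff hSs (le_refl t),
      by rw [Finset.card_sdiff_of_subset htS, hScard]⟩
  · intro u hu
    rw [Finset.mem_powersetCard] at hu
    obtain ⟨hus, hucard⟩ := hu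
    have hdisj : Disjoint u t := (Finset.sdiff_disjoint.mono_left hus)
    simp only [Finset.mem_filter, Finset.mem_powersetCard]
    refine ⟨⟨Finset.union_subset (hus.trans (Finset.sdiff_subset)) hts, ?_⟩,
      Finset.subset_union_right⟩
    rw [Finset.card_union_of_disjoint hdisj, hucard]
    omega
  · intro S hS
    simp only [Finset.mem_filter] at hS
    exact Finset.sdiff_union_of_subset hS.2
  · intro u hu
    rw [Finset.mem_powersetCard] at hu
    have hdisj : Disjoint u t := (Finset.sdiff_disjoint.mono_left hu.1)
    exact Finset.union_sdiff_cancel_right hdisj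

/-- Sampling-without-replacement variance bound:
`E‖(1/m) Σ_{l∈S} a_l‖² ≤ (1_{m<n}/(m n)) Σ_l ‖a_l‖²`. -/
theorem sampling_without_replacement_variance_bound {d n m : ℕ}
    (hn : 2 ≤ n) (hm : 1 ≤ m) (hmn : m ≤ n)
    (a : Fin n → EuclideanSpace ℝ (Fin d))
    (hsum : ∑ l, a l = 0) :
    ((Finset.powersetCard m (Finset.univ : Finset (Fin n))).card : ℝ)⁻¹ *
      ∑ S ∈ Finset.powersetCard m (Finset.univ : Finset (Fin n)),
        ‖(m : ℝ)⁻¹ • ∑ l ∈ S, a l‖ ^ 2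
    ≤ (if m < n then (1 : ℝ) else 0) / (m * n) * ∑ l, ‖a l‖ ^ 2 := by
  classical
  set P := Finset.powersetCard m (Finset.univ : Finset (Fin n)) with hP
  set g : Fin n → Fin n → ℝ := fun i j => ⟪a i, a j⟫ with hg
  set A : ℕ := (n - 1).choose (m - 1) with hA
  set B : ℕ := if 2 ≤ m then (n - 2).choose (m - 2) else 0 with hB
  set C : ℕ := (n - 2).choose (m - 1) with hC
  have hcount : ∀ i j : Fin n,
      ((P.filter (fun S => i ∈ S ∧ j ∈ S)).card : ℕ) = if i = j then A else B := by
    intro i j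
    by_cases hij : i = j
    · subst hij
      rw [if_pos rfl]
      have heq : (P.filter (fun S => i ∈ S ∧ i ∈ S))
          = (P.filter (fun S => ({i} : Finset (Fin n)) ⊆ S)) := by
        apply Finset.filter_congr
        intro S _
        simp
      rw [heq, hP, count_subsets _ _ _ (Finset.subset_univ _) (by simpa using hm)]
      simp [hA]
    · rw [if_neg hij]
      rcases le_or_gt 2 m with h2 | h2
      · have hpred : (P.filter (fun S => i ∈ S ∧ j ∈ S))
            = (P.filter (fun S => ({i, j} : Finset (Fin n)) ⊆ S)) := by
          apply Finset.filter_congr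
          intro S _
          simp [Finset.insert_subset_iff]
        have hcard2 : ({i, j} : Finset (Fin n)).card = 2 := by
          rw [Finset.card_insert_of_notMem (by simpa using hij), Finset.card_singleton]
        rw [hpred, hP, count_subsets _ _ _ (Finset.subset_univ _) (by omega)]
        rw [Finset.card_univ, Fintype.card_fin, hcard2, hB, if_pos h2]
      · rw [hB, if_neg (by omega)]
        rw [Finset.card_eq_zero, Finset.filter_eq_empty_iff]
        intro S hS
        rw [hP, Finset.mem_powersetCard] at hS
        rintro ⟨hi, hj⟩
        have := Finset.one_lt_card.mpr ⟨i, hi, j, hj, hij⟩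
        omega
  have hABC : A = B + C := by
    rcases le_or_gt 2 m with h2 | h2
    · rw [hA, hB, hC, if_pos h2]
      have h1 : n - 1 = (n - 2) + 1 := by omega
      have h2' : m - 1 = (m - 2) + 1 := by omega
      rw [h1, h2', Nat.choose_succ_succ]
    · have hm1 : m = 1 := by omega
      subst hm1
      simp [hA, hB, hC]
  have hdouble : ∀ S : Finset (Fin n), ‖∑ l ∈ S, a l‖ ^ 2 = ∑ i ∈ S, ∑ j ∈ S, g i j := by
    intro S
    rw [← real_inner_self_eq_norm_sq, sum_inner]
    exact Finset.sum_congr rfl fun i _ => inner_sum _ _ _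
  have hzero : ∑ i, ∑ j, g i j = 0 := by
    have h : ∑ i, ∑ j, g i j = ⟪∑ i, a i, ∑ j, a j⟫ := by
      rw [sum_inner]
      exact Finset.sum_congr rfl fun i _ => (inner_sum _ _ _).symm
    rw [h, hsum, inner_zero_left]
  have hswap : ∀ S : Finset (Fin n),
      ∑ i ∈ S, ∑ j ∈ S, g i j = ∑ i, ∑ j, (if i ∈ S ∧ j ∈ S then g i j else 0) := by
    intro S
    calc ∑ i ∈ S, ∑ j ∈ S, g i j
        = ∑ i ∈ S, ∑ j, (if j ∈ S then g i j else 0) := by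
          refine Finset.sum_congr rfl fun i _ => ?_
          rw [Finset.sum_ite_mem, Finset.univ_inter]
      _ = ∑ i, (if i ∈ S then ∑ j, (if j ∈ S then g i j else 0) else 0) := by
          rw [Finset.sum_ite_mem, Finset.univ_inter]
      _ = ∑ i, ∑ j, (if i ∈ S ∧ j ∈ S then g i j else 0) := by
          refine Finset.sum_congr rfl fun i _ => ?_
          by_cases hi : i ∈ S
          · simp [hi]
          · simp [hi]
  have htotal : ∑ S ∈ P, ‖∑ l ∈ S, a l‖ ^ 2 = (C : ℝ) * ∑ l, ‖a l‖ ^ 2 := by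
    calc ∑ S ∈ P, ‖∑ l ∈ S, a l‖ ^ 2
        = ∑ S ∈ P, ∑ i, ∑ j, (if i ∈ S ∧ j ∈ S then g i j else 0) := by
          exact Finset.sum_congr rfl fun S _ => (hdouble S).trans (hswap S)
      _ = ∑ i, ∑ j, ∑ S ∈ P, (if i ∈ S ∧ j ∈ S then g i j else 0) := by
          rw [Finset.sum_comm]
          exact Finset.sum_congr rfl fun i _ => Finset.sum_comm
      _ = ∑ i, ∑ j, ((P.filter (fun S => i ∈ S ∧ j ∈ S)).card : ℝ) * g i j := by
          refine Finset.sum_congr rfl fun i _ => Finset.sum_congr rfl fun j _ => ?_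
          rw [← Finset.sum_filter, Finset.sum_const, nsmul_eq_mul]
      _ = ∑ i, ∑ j, ((B : ℝ) * g i j + (if i = j then (C : ℝ) * g i j else 0)) := by
          refine Finset.sum_congr rfl fun i _ => Finset.sum_congr rfl fun j _ => ?_
          rw [hcount i j]
          by_cases hij : i = j
          · rw [if_pos hij, if_pos hij, hABC]
            push_cast
            ring
          · rw [if_neg hij, if_neg hij, add_zero]
      _ = (B : ℝ) * ∑ i, ∑ j, g i j + (C : ℝ) * ∑ i, g i i := by
          simp only [Finset.sum_add_distrib, Finset.sum_ite_eq, Finset.mem_univ, if_true,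
            ← Finset.mul_sum]
      _ = (C : ℝ) * ∑ l, ‖a l‖ ^ 2 := by
          rw [hzero, mul_zero, zero_add]
          congr 1
          exact Finset.sum_congr rfl fun i _ => (real_inner_self_eq_norm_sq _)
  have hsmul : ∀ S : Finset (Fin n),
      ‖(m : ℝ)⁻¹ • ∑ l ∈ S, a l‖ ^ 2 = ((m : ℝ) ^ 2)⁻¹ * ‖∑ l ∈ S, a l‖ ^ 2 := by
    intro S
    rw [norm_smul, mul_pow, norm_inv, Real.norm_natCast, ← inv_pow]
  have hcardP : (P.card : ℕ) = n.choose m := by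
    rw [hP, Finset.card_powersetCard, Finset.card_univ, Fintype.card_fin]
  have hT : (0 : ℝ) ≤ ∑ l, ‖a l‖ ^ 2 :=
    Finset.sum_nonneg fun l _ => sq_nonneg _
  have hLHS : ((P.card : ℝ))⁻¹ * ∑ S ∈ P, ‖(m : ℝ)⁻¹ • ∑ l ∈ S, a l‖ ^ 2
      = ((n.choose m : ℝ))⁻¹ * (((m : ℝ) ^ 2)⁻¹ * ((C : ℝ) * ∑ l, ‖a l‖ ^ 2)) := by
    rw [hcardP]
    congr 1
    rw [← htotal, Finset.mul_sum]
    exact Finset.sum_congr rfl fun S _ => hsmul S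
  rw [hLHS]
  by_cases hlt : m < n
  · rw [if_pos hlt]
    have hchoosepos : (0 : ℝ) < (n.choose m : ℝ) := by
      exact_mod_cast Nat.choose_pos hmn
    have hmpos : (0 : ℝ) < (m : ℝ) := by exact_mod_cast hm
    have hnpos : (0 : ℝ) < (n : ℝ) := by positivity
    have hid : n * (n - 1).choose (m - 1) = n.choose m * m := by
      have h1 : n - 1 + 1 = n := by omega
      have h2 : m - 1 + 1 = m := by omega
      calc n * (n - 1).choose (m - 1)
          = (n - 1).succ * (n - 1).choose (m - 1) := by rw [Nat.succ_eq_add_one, h1]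
        _ = (n - 1 + 1).choose (m - 1 + 1) * (m - 1 + 1) := Nat.add_one_mul_choose_eq _ _
        _ = n.choose m * m := by rw [h1, h2]
    have hmono : C ≤ (n - 1).choose (m - 1) := Nat.choose_le_choose _ (by omega)
    have keyN : C * (m * n) ≤ n.choose m * m ^ 2 := by
      calc C * (m * n) = (n * C) * m := by ring
        _ ≤ (n * (n - 1).choose (m - 1)) * m :=
            Nat.mul_le_mul_right _ (Nat.mul_le_mul_left _ hmono)
        _ = (n.choose m * m) * m := by rw [hid]
        _ = n.choose m * m ^ 2 := by ring
    have hcoef : ((n.choose m : ℝ))⁻¹ * (((m : ℝ) ^ 2)⁻¹ * (C : ℝ)) ≤ 1 / (m * n) := by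
      have heq : ((n.choose m : ℝ))⁻¹ * (((m : ℝ) ^ 2)⁻¹ * (C : ℝ))
          = (C : ℝ) / ((n.choose m : ℝ) * (m : ℝ) ^ 2) := by
        field_simp
      rw [heq, div_le_div_iff₀ (by positivity) (by positivity), one_mul]
      exact_mod_cast keyN
    calc ((n.choose m : ℝ))⁻¹ * (((m : ℝ) ^ 2)⁻¹ * ((C : ℝ) * ∑ l, ‖a l‖ ^ 2))
        = (((n.choose m : ℝ))⁻¹ * (((m : ℝ) ^ 2)⁻¹ * (C : ℝ))) * ∑ l, ‖a l‖ ^ 2 := by ring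
      _ ≤ (1 / (m * n)) * ∑ l, ‖a l‖ ^ 2 := mul_le_mul_of_nonneg_right hcoef hT
      _ = (1 : ℝ) / (↑m * ↑n) * ∑ l, ‖a l‖ ^ 2 := by norm_num
  · rw [if_neg hlt]
    have hmn' : m = n := by omega
    have hC0 : C = 0 := by
      rw [hC, hmn']
      exact Nat.choose_eq_zero_of_lt (by omega)
    rw [hC0]
    simp
end

section
/- Let p₁, …, p_r be i.i.d. N(0, (1/r) I_d) vectors in ℝ^d and g ∈ ℝ^d fixed. Then E‖Σ_{i=1}^r (p_iᵀ g) p_i‖² = ((d + r + 1)/r) ‖g‖². In particular E‖Σ_i (p_iᵀg) p_i‖² ≤ (2d/r) ‖g‖² whenever r ≤ d − 1. -/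
open MeasureTheory ProbabilityTheory Real
open scoped NNReal ENNReal

/-! ### Auxiliary real-line Gaussian integral facts -/

lemma rps_integrable_poly_gauss {b : ℝ} (hb : 0 < b) (n : ℕ) :
    Integrable (fun x : ℝ => x ^ n * Real.exp (-b * x ^ 2)) := by
  have hb2 : 0 < b / 2 := by linarith
  have hmeas : AEStronglyMeasurable (fun x : ℝ => x ^ n * Real.exp (-b * x ^ 2)) volume :=
    (Continuous.mul (continuous_pow n) (Real.continuous_exp.comp (by continuity))).aestronglyMeasurable
  refine Integrable.mono' (((integrable_exp_neg_mul_sq hb2).const_mul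
      ((n.factorial : ℝ) * Real.exp (1 / (2 * b))))) hmeas ?_
  filter_upwards with x
  have h1 : |x| ^ n ≤ (n.factorial : ℝ) * Real.exp |x| := by
    have := Real.pow_div_factorial_le_exp (x := |x|) (abs_nonneg x) n
    have hfac : (0:ℝ) < n.factorial := by positivity
    calc |x| ^ n = |x| ^ n / n.factorial * n.factorial := by field_simp
    _ ≤ Real.exp |x| * n.factorial := by
        apply mul_le_mul_of_nonneg_right this hfac.le
    _ = (n.factorial : ℝ) * Real.exp |x| := by ring
  have h2 : |x| - b * x ^ 2 ≤ 1 / (2 * b) + (-(b/2) * x ^ 2) := by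
    have key : 0 ≤ b / 2 * (|x| - 1 / b) ^ 2 := by positivity
    have hx2 : |x| ^ 2 = x ^ 2 := sq_abs x
    have hb' : b ≠ 0 := ne_of_gt hb
    have hinv : 2 * b * (1/(2*b)) = 1 := by field_simp
    nlinarith [sq_nonneg (b * |x| - 1), sq_abs x, mul_pos hb hb, hinv]
  calc ‖x ^ n * Real.exp (-b * x ^ 2)‖ = |x| ^ n * Real.exp (-b * x ^ 2) := by
        rw [norm_mul, norm_pow, Real.norm_eq_abs, Real.norm_eq_abs, Real.abs_exp]
  _ ≤ ((n.factorial : ℝ) * Real.exp |x|) * Real.exp (-b * x ^ 2) :=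
        mul_le_mul_of_nonneg_right h1 (Real.exp_nonneg _)
  _ = (n.factorial : ℝ) * Real.exp (|x| - b * x ^ 2) := by
        rw [mul_assoc, ← Real.exp_add]; ring_nf
  _ ≤ (n.factorial : ℝ) * Real.exp (1 / (2 * b) + (-(b/2) * x ^ 2)) := by
        apply mul_le_mul_of_nonneg_left _ (by positivity)
        exact Real.exp_le_exp.mpr h2
  _ = (n.factorial : ℝ) * Real.exp (1 / (2 * b)) * Real.exp (-(b/2) * x ^ 2) := by
        rw [Real.exp_add, mul_assoc]

lemma rps_I1 {b : ℝ} (hb : 0 < b) : ∫ x : ℝ, x ^ 1 * Real.exp (-b * x ^ 2) = 0 := by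
  have hderiv : ∀ x : ℝ, HasDerivAt (fun y : ℝ => -(2*b)⁻¹ * Real.exp (-b * y ^ 2))
      (x ^ 1 * Real.exp (-b * x ^ 2)) x := by
    intro x
    have h1 : HasDerivAt (fun y : ℝ => -b * y ^ 2) (-b * (2 * x)) x := by
      simpa using ((hasDerivAt_pow 2 x).const_mul (-b))
    have h2 := (h1.exp).const_mul (-(2*b)⁻¹)
    refine h2.congr_deriv ?_
    have hb' : b ≠ 0 := hb.ne'
    field_simp
  have hint : Integrable (fun x : ℝ => x ^ 1 * Real.exp (-b * x ^ 2)) :=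
    rps_integrable_poly_gauss hb 1
  have hf : Integrable (fun y : ℝ => -(2*b)⁻¹ * Real.exp (-b * y ^ 2)) := by
    simpa using (rps_integrable_poly_gauss hb 0).const_mul (-(2*b)⁻¹)
  exact integral_eq_zero_of_hasDerivAt_of_integrable hderiv hint hf

lemma rps_rec {b : ℝ} (hb : 0 < b) (n : ℕ) :
    ∫ x : ℝ, x ^ (n+2) * Real.exp (-b * x ^ 2)
      = ((n+1 : ℝ) / (2*b)) * ∫ x : ℝ, x ^ n * Real.exp (-b * x ^ 2) := by
  have hderiv : ∀ x : ℝ, HasDerivAt (fun y : ℝ => y ^ (n+1) * Real.exp (-b * y ^ 2))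
      ((n+1 : ℝ) * (x ^ n * Real.exp (-b * x ^ 2)) - 2*b*(x ^ (n+2) * Real.exp (-b * x ^ 2))) x := by
    intro x
    have h1 : HasDerivAt (fun y : ℝ => -b * y ^ 2) (-b * (2 * x)) x := by
      simpa using ((hasDerivAt_pow 2 x).const_mul (-b))
    have h2 := (hasDerivAt_pow (n+1) x).mul h1.exp
    refine h2.congr_deriv ?_
    push_cast
    ring
  have hf' : Integrable (fun x : ℝ => (n+1 : ℝ) * (x ^ n * Real.exp (-b * x ^ 2))
      - 2*b*(x ^ (n+2) * Real.exp (-b * x ^ 2))) :=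
    ((rps_integrable_poly_gauss hb n).const_mul _).sub
      ((rps_integrable_poly_gauss hb (n+2)).const_mul _)
  have hf : Integrable (fun x : ℝ => x ^ (n+1) * Real.exp (-b * x ^ 2)) :=
    rps_integrable_poly_gauss hb (n+1)
  have h0 := integral_eq_zero_of_hasDerivAt_of_integrable hderiv hf' hf
  rw [integral_sub ((rps_integrable_poly_gauss hb n).const_mul _)
      ((rps_integrable_poly_gauss hb (n+2)).const_mul _),
    integral_const_mul, integral_const_mul, sub_eq_zero] at h0
  have hb' : (2*b) ≠ 0 := by positivity
  rw [eq_comm, div_mul_eq_mul_div, div_eq_iff hb', h0]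
  ring

/-! ### Moments of the real Gaussian measure -/

section GaussMoments
variable {v : ℝ≥0} (hv : v ≠ 0)
include hv

omit hv in
lemma rps_pdf_eq (x : ℝ) :
    gaussianPDFReal 0 v x = (√(2 * π * v))⁻¹ * Real.exp (-(2*(v:ℝ))⁻¹ * x ^ 2) := by
  rw [gaussianPDFReal]
  congr 1
  rw [sub_zero]
  congr 1
  rw [neg_div, neg_mul, div_eq_inv_mul]

lemma rps_gauss_integral (f : ℝ → ℝ) :
    ∫ x, f x ∂(gaussianReal 0 v) = ∫ x, gaussianPDFReal 0 v x * f x := by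
  rw [gaussianReal_of_var_ne_zero 0 hv]
  have hd : gaussianPDF 0 v = fun x => ((Real.toNNReal (gaussianPDFReal 0 v x) : ℝ≥0) : ℝ≥0∞) := by
    funext x
    rw [gaussianPDF, ENNReal.ofReal]
  rw [hd, integral_withDensity_eq_integral_smul
    ((measurable_gaussianPDFReal 0 v).real_toNNReal) f]
  congr 1
  funext x
  rw [NNReal.smul_def, smul_eq_mul]
  congr 1
  exact Real.coe_toNNReal _ (gaussianPDFReal_nonneg 0 v x)

lemma rps_gauss_moment (n : ℕ) :
    ∫ x, x ^ n ∂(gaussianReal 0 v)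
      = (√(2 * π * v))⁻¹ * ∫ x : ℝ, x ^ n * Real.exp (-(2*(v:ℝ))⁻¹ * x ^ 2) := by
  rw [rps_gauss_integral hv]
  rw [← integral_const_mul]
  congr 1
  funext x
  rw [rps_pdf_eq]
  ring

omit hv in
lemma rps_v_pos (hv : v ≠ 0) : 0 < (v : ℝ) := by
  exact_mod_cast pos_iff_ne_zero.mpr hv

omit hv in
lemma rps_b_pos (hv : v ≠ 0) : 0 < (2*(v:ℝ))⁻¹ := by
  have := rps_v_pos hv
  positivity

lemma rps_integrable_moment (n : ℕ) :
    Integrable (fun x : ℝ => x ^ n) (gaussianReal 0 v) := by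
  rw [gaussianReal_of_var_ne_zero 0 hv]
  have hd : gaussianPDF 0 v = fun x => ((Real.toNNReal (gaussianPDFReal 0 v x) : ℝ≥0) : ℝ≥0∞) := by
    funext x
    rw [gaussianPDF, ENNReal.ofReal]
  rw [hd, integrable_withDensity_iff_integrable_coe_smul
    ((measurable_gaussianPDFReal 0 v).real_toNNReal)]
  have : (fun x : ℝ => (Real.toNNReal (gaussianPDFReal 0 v x) : ℝ) • x ^ n)
      = fun x : ℝ => (√(2 * π * v))⁻¹ * (x ^ n * Real.exp (-(2*(v:ℝ))⁻¹ * x ^ 2)) := by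
    funext x
    rw [smul_eq_mul, Real.coe_toNNReal _ (gaussianPDFReal_nonneg 0 v x), rps_pdf_eq]
    ring
  rw [this]
  exact (rps_integrable_poly_gauss (rps_b_pos hv) n).const_mul _

omit hv in
lemma rps_m0 : ∫ x, x ^ 0 ∂(gaussianReal 0 v) = 1 := by
  simp

lemma rps_base : (√(2 * π * v))⁻¹ * ∫ x : ℝ, x ^ 0 * Real.exp (-(2*(v:ℝ))⁻¹ * x ^ 2) = 1 := by
  rw [← rps_gauss_moment hv 0, rps_m0]

lemma rps_m1 : ∫ x, x ^ 1 ∂(gaussianReal 0 v) = 0 := by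
  rw [rps_gauss_moment hv, rps_I1 (rps_b_pos hv), mul_zero]

lemma rps_m2 : ∫ x, x ^ 2 ∂(gaussianReal 0 v) = (v : ℝ) := by
  have hb := rps_b_pos hv
  have h2 : (((0:ℕ):ℝ)+1) / (2*(2*(v:ℝ))⁻¹) = (v:ℝ) := by
    have := rps_v_pos hv
    field_simp
    norm_num
  rw [rps_gauss_moment hv, show (2:ℕ) = 0 + 2 from rfl, rps_rec hb 0, h2]
  linear_combination (v:ℝ) * rps_base hv

lemma rps_m3 : ∫ x, x ^ 3 ∂(gaussianReal 0 v) = 0 := by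
  have hb := rps_b_pos hv
  rw [rps_gauss_moment hv, show (3:ℕ) = 1 + 2 from rfl, rps_rec hb 1, rps_I1 hb]
  ring

lemma rps_m4 : ∫ x, x ^ 4 ∂(gaussianReal 0 v) = 3 * (v : ℝ)^2 := by
  have hb := rps_b_pos hv
  have hv' := rps_v_pos hv
  have h2 : (((2:ℕ):ℝ)+1) / (2*(2*(v:ℝ))⁻¹) = 3 * (v:ℝ) := by field_simp; ring
  have hm2 : (√(2 * π * ↑v))⁻¹ * ∫ x : ℝ, x ^ 2 * Real.exp (-(2*(v:ℝ))⁻¹ * x ^ 2) = (v:ℝ) := by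
    rw [← rps_gauss_moment hv 2]; exact rps_m2 hv
  rw [rps_gauss_moment hv, show (4:ℕ) = 2 + 2 from rfl, rps_rec hb 2, h2]
  linear_combination (3*(v:ℝ)) * hm2

end GaussMoments

/-! ### Product-measure factorization lemmas -/

section PiLemmas

variable {E : Type*} [MeasurableSpace E] (μ : Measure E)

theorem rps_integral_pi_prod [SigmaFinite μ] :
    ∀ {n : ℕ} (f : Fin n → E → ℝ),
      ∫ x : Fin n → E, ∏ i, f i (x i) ∂(Measure.pi fun _ => μ)
        = ∏ i, ∫ x, f i x ∂μ := by
  intro n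
  induction n with
  | zero =>
      intro f
      simp only [Finset.univ_eq_empty, Finset.prod_empty, integral_const, smul_eq_mul, mul_one]
      rw [Measure.real, Measure.pi_univ]
      simp
  | succ n n_ih =>
      intro f
      calc
        _ = ∫ x : E × (Fin n → E),
            f 0 x.1 * ∏ i : Fin n, f (Fin.succ i) (x.2 i)
            ∂(μ.prod (Measure.pi fun _ => μ)) := by
          rw [← ((measurePreserving_piFinSuccAbove
            (fun _ : Fin (n+1) => μ) 0).symm).integral_comp']
          simp only [MeasurableEquiv.piFinSuccAbove_symm_apply, Fin.insertNthEquiv,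
            Fin.prod_univ_succ, Fin.insertNth_zero, Equiv.coe_fn_mk, Fin.cons_succ,
            Fin.zero_succAbove, Fin.cons_zero, Fin.succAbove_zero, cast_eq, Function.comp_def]
        _ = (∫ x, f 0 x ∂μ) * ∏ i : Fin n, ∫ x, f (Fin.succ i) x ∂μ := by
          rw [← n_ih, ← integral_prod_mul]
        _ = ∏ i, ∫ x, f i x ∂μ := by rw [Fin.prod_univ_succ]

theorem rps_integrable_pi_prod [SigmaFinite μ] :
    ∀ {n : ℕ} (f : Fin n → E → ℝ), (∀ i, Integrable (f i) μ) →
      Integrable (fun x : Fin n → E => ∏ i, f i (x i)) (Measure.pi fun _ => μ) := by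
  intro n
  induction n with
  | zero =>
      intro f _
      simp only [Finset.univ_eq_empty, Finset.prod_empty]
      haveI : IsProbabilityMeasure (Measure.pi fun _ : Fin 0 => μ) :=
        ⟨by rw [Measure.pi_univ]; simp⟩
      apply integrable_const
  | succ n n_ih =>
      intro f hf
      have A := ((measurePreserving_piFinSuccAbove (fun _ : Fin (n+1) => μ) 0).symm)
      rw [← A.integrable_comp_emb (MeasurableEquiv.measurableEmbedding _)]
      simp only [MeasurableEquiv.piFinSuccAbove_symm_apply, Fin.insertNthEquiv,
        Fin.prod_univ_succ, Fin.insertNth_zero, Equiv.coe_fn_mk, Fin.cons_succ,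
        Fin.zero_succAbove, Fin.cons_zero, Fin.succAbove_zero, cast_eq, Function.comp_def]
      have h2 : Integrable (fun (x : Fin n → E) ↦ ∏ j, f (Fin.succ j) (x j))
          (Measure.pi fun _ => μ) := n_ih _ (fun i ↦ hf _)
      exact Integrable.mul_prod (hf 0) h2

variable {n : ℕ} [IsProbabilityMeasure μ]

theorem rps_integral_eval (φ : E → ℝ) (i : Fin n) :
    ∫ x : Fin n → E, φ (x i) ∂(Measure.pi fun _ => μ) = ∫ t, φ t ∂μ := by
  have h := rps_integral_pi_prod μ (fun m => if m = i then φ else fun _ => 1)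
  have h1 : (fun x : Fin n → E => ∏ m, (if m = i then φ else fun _ => 1) (x m))
      = fun x : Fin n → E => φ (x i) := by
    funext x
    rw [Finset.prod_eq_single i (fun m _ hm => by simp [hm]) (fun h => absurd (Finset.mem_univ i) h)]
    simp
  rw [h1] at h
  rw [h, Finset.prod_eq_single i (fun m _ hm => by simp [hm]) (fun h => absurd (Finset.mem_univ i) h)]
  simp

theorem rps_integrable_eval {φ : E → ℝ} (hφ : Integrable φ μ) (i : Fin n) :
    Integrable (fun x : Fin n → E => φ (x i)) (Measure.pi fun _ => μ) := by
  have h := rps_integrable_pi_prod μ (fun m => if m = i then φ else fun _ => 1)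
    (fun m => by by_cases hm : m = i <;> simp [hm, hφ, integrable_const])
  have h1 : (fun x : Fin n → E => ∏ m, (if m = i then φ else fun _ => 1) (x m))
      = fun x : Fin n → E => φ (x i) := by
    funext x
    rw [Finset.prod_eq_single i (fun m _ hm => by simp [hm]) (fun h => absurd (Finset.mem_univ i) h)]
    simp
  rwa [h1] at h

omit [MeasurableSpace E] in
theorem rps_prod_repr_two (φ ψ : E → ℝ) {i j : Fin n} (hij : i ≠ j) (x : Fin n → E) :
    ∏ m, (if m = i then φ else if m = j then ψ else fun _ => 1) (x m)
      = φ (x i) * ψ (x j) := by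
  rw [← Finset.prod_subset (Finset.subset_univ ({i, j} : Finset (Fin n)))
    (fun m _ hm => by
      simp only [Finset.mem_insert, Finset.mem_singleton, not_or] at hm
      simp [hm.1, hm.2])]
  rw [Finset.prod_pair hij]
  simp [hij, Ne.symm hij]

theorem rps_integral_two (φ ψ : E → ℝ) {i j : Fin n} (hij : i ≠ j) :
    ∫ x : Fin n → E, φ (x i) * ψ (x j) ∂(Measure.pi fun _ => μ)
      = (∫ t, φ t ∂μ) * ∫ t, ψ t ∂μ := by
  have h := rps_integral_pi_prod μ (fun m => if m = i then φ else if m = j then ψ else fun _ => 1)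
  simp_rw [rps_prod_repr_two φ ψ hij] at h
  rw [h, ← Finset.prod_subset (Finset.subset_univ ({i, j} : Finset (Fin n)))
    (fun m _ hm => by
      simp only [Finset.mem_insert, Finset.mem_singleton, not_or] at hm
      simp [hm.1, hm.2])]
  rw [Finset.prod_pair hij]
  simp [hij, Ne.symm hij]

theorem rps_integrable_two {φ ψ : E → ℝ} (hφ : Integrable φ μ) (hψ : Integrable ψ μ)
    {i j : Fin n} (hij : i ≠ j) :
    Integrable (fun x : Fin n → E => φ (x i) * ψ (x j)) (Measure.pi fun _ => μ) := by
  have h := rps_integrable_pi_prod μ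
    (fun m => if m = i then φ else if m = j then ψ else fun _ => 1)
    (fun m => by
      by_cases h1 : m = i
      · simpa [h1] using hφ
      · by_cases h2 : m = j <;> simp [h1, h2, hφ, hψ, Ne.symm hij, integrable_const])
  simp_rw [rps_prod_repr_two φ ψ hij] at h
  exact h

omit [MeasurableSpace E] in
theorem rps_prod_repr_three (φ ψ χ : E → ℝ) {i j k : Fin n}
    (hij : i ≠ j) (hik : i ≠ k) (hjk : j ≠ k) (x : Fin n → E) :
    ∏ m, (if m = i then φ else if m = j then ψ else if m = k then χ else fun _ => 1) (x m)
      = φ (x i) * ψ (x j) * χ (x k) := by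
  rw [← Finset.prod_subset (Finset.subset_univ ({i, j, k} : Finset (Fin n)))
    (fun m _ hm => by
      simp only [Finset.mem_insert, Finset.mem_singleton, not_or] at hm
      simp [hm.1, hm.2.1, hm.2.2])]
  rw [Finset.prod_insert (by simp [hij, hik]), Finset.prod_pair hjk]
  simp [hij, hik, hjk, Ne.symm hij, Ne.symm hik, Ne.symm hjk, mul_assoc]

theorem rps_integral_three (φ ψ χ : E → ℝ) {i j k : Fin n}
    (hij : i ≠ j) (hik : i ≠ k) (hjk : j ≠ k) :
    ∫ x : Fin n → E, φ (x i) * ψ (x j) * χ (x k) ∂(Measure.pi fun _ => μ)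
      = (∫ t, φ t ∂μ) * (∫ t, ψ t ∂μ) * ∫ t, χ t ∂μ := by
  have h := rps_integral_pi_prod μ
    (fun m => if m = i then φ else if m = j then ψ else if m = k then χ else fun _ => 1)
  simp_rw [rps_prod_repr_three φ ψ χ hij hik hjk] at h
  rw [h, ← Finset.prod_subset (Finset.subset_univ ({i, j, k} : Finset (Fin n)))
    (fun m _ hm => by
      simp only [Finset.mem_insert, Finset.mem_singleton, not_or] at hm
      simp [hm.1, hm.2.1, hm.2.2])]
  rw [Finset.prod_insert (by simp [hij, hik]), Finset.prod_pair hjk]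
  simp [hij, hik, hjk, Ne.symm hij, Ne.symm hik, Ne.symm hjk, mul_assoc]

theorem rps_integrable_three {φ ψ χ : E → ℝ} (hφ : Integrable φ μ) (hψ : Integrable ψ μ)
    (hχ : Integrable χ μ) {i j k : Fin n} (hij : i ≠ j) (hik : i ≠ k) (hjk : j ≠ k) :
    Integrable (fun x : Fin n → E => φ (x i) * ψ (x j) * χ (x k)) (Measure.pi fun _ => μ) := by
  have h := rps_integrable_pi_prod μ
    (fun m => if m = i then φ else if m = j then ψ else if m = k then χ else fun _ => 1)
    (fun m => by
      by_cases h1 : m = i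
      · simpa [h1] using hφ
      · by_cases h2 : m = j
        · simpa [h1, h2, Ne.symm hij] using hψ
        · by_cases h3 : m = k <;> simp [h1, h2, h3, hχ, Ne.symm hik, Ne.symm hjk, integrable_const])
  simp_rw [rps_prod_repr_three φ ψ χ hij hik hjk] at h
  exact h

end PiLemmas

/-! ### Vector-level (level 2) computations -/

section Level2

variable {v : ℝ≥0} (hv : v ≠ 0) {d : ℕ} (g : Fin d → ℝ)
include hv

lemma rps_gm1 : ∫ t : ℝ, t ∂(gaussianReal 0 v) = 0 := by
  simpa using rps_m1 hv
lemma rps_gm2 : ∫ t : ℝ, t * t ∂(gaussianReal 0 v) = (v : ℝ) := by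
  have h : (fun t : ℝ => t * t) = fun t : ℝ => t ^ 2 := by funext t; ring
  rw [h]; exact rps_m2 hv
lemma rps_gm3 : ∫ t : ℝ, t * (t * t) ∂(gaussianReal 0 v) = 0 := by
  have h : (fun t : ℝ => t * (t * t)) = fun t : ℝ => t ^ 3 := by funext t; ring
  rw [h]; exact rps_m3 hv
lemma rps_gm4 : ∫ t : ℝ, (t * t) * (t * t) ∂(gaussianReal 0 v) = 3 * (v : ℝ)^2 := by
  have h : (fun t : ℝ => (t * t) * (t * t)) = fun t : ℝ => t ^ 4 := by funext t; ring
  rw [h]; exact rps_m4 hv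

lemma rps_gi1 : Integrable (fun t : ℝ => t) (gaussianReal 0 v) := by
  simpa using rps_integrable_moment hv 1
lemma rps_gi2 : Integrable (fun t : ℝ => t * t) (gaussianReal 0 v) := by
  have h : (fun t : ℝ => t * t) = fun t : ℝ => t ^ 2 := by funext t; ring
  rw [h]; exact rps_integrable_moment hv 2
lemma rps_gi3 : Integrable (fun t : ℝ => t * (t * t)) (gaussianReal 0 v) := by
  have h : (fun t : ℝ => t * (t * t)) = fun t : ℝ => t ^ 3 := by funext t; ring
  rw [h]; exact rps_integrable_moment hv 3
lemma rps_gi4 : Integrable (fun t : ℝ => (t * t) * (t * t)) (gaussianReal 0 v) := by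
  have h : (fun t : ℝ => (t * t) * (t * t)) = fun t : ℝ => t ^ 4 := by funext t; ring
  rw [h]; exact rps_integrable_moment hv 4

lemma rps_base2 (j k : Fin d) :
    ∫ u : Fin d → ℝ, u j * u k ∂(Measure.pi fun _ => gaussianReal 0 v)
      = if j = k then (v : ℝ) else 0 := by
  by_cases hjk : j = k
  · subst hjk
    rw [if_pos rfl]
    have h : (fun u : Fin d → ℝ => u j * u j)
        = fun u : Fin d → ℝ => (fun t : ℝ => t * t) (u j) := rfl
    rw [h, rps_integral_eval (gaussianReal 0 v) (fun t : ℝ => t * t) j, rps_gm2 hv]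
  · rw [if_neg hjk]
    have h : (fun u : Fin d → ℝ => u j * u k)
        = fun u : Fin d → ℝ => (fun t : ℝ => t) (u j) * (fun t : ℝ => t) (u k) := rfl
    rw [h, rps_integral_two (gaussianReal 0 v) (fun t : ℝ => t) (fun t : ℝ => t) hjk, rps_gm1 hv, zero_mul]

lemma rps_intble_base2 (j k : Fin d) :
    Integrable (fun u : Fin d → ℝ => u j * u k) (Measure.pi fun _ => gaussianReal 0 v) := by
  by_cases hjk : j = k
  · subst hjk
    exact rps_integrable_eval _ (rps_gi2 hv) j
  · exact rps_integrable_two _ (rps_gi1 hv) (rps_gi1 hv) hjk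

lemma rps_mono_int (j j' k : Fin d) :
    ∫ u : Fin d → ℝ, u j * u j' * (u k * u k) ∂(Measure.pi fun _ => gaussianReal 0 v)
      = if j = j' then (if j = k then 3 * (v:ℝ)^2 else (v:ℝ)^2) else 0 := by
  by_cases hjj : j = j'
  · subst hjj
    rw [if_pos rfl]
    by_cases hjk : j = k
    · subst hjk
      rw [if_pos rfl]
      have h : (fun u : Fin d → ℝ => u j * u j * (u j * u j))
          = fun u : Fin d → ℝ => (fun t : ℝ => (t * t) * (t * t)) (u j) := rfl
      rw [h, rps_integral_eval (gaussianReal 0 v) (fun t : ℝ => (t * t) * (t * t)) j, rps_gm4 hv]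
    · rw [if_neg hjk]
      have h : (fun u : Fin d → ℝ => u j * u j * (u k * u k))
          = fun u : Fin d → ℝ => (fun t : ℝ => t * t) (u j) * (fun t : ℝ => t * t) (u k) := rfl
      rw [h, rps_integral_two (gaussianReal 0 v) (fun t : ℝ => t * t) (fun t : ℝ => t * t) hjk, rps_gm2 hv]
      ring
  · rw [if_neg hjj]
    by_cases hjk : j = k
    · subst hjk
      have h : (fun u : Fin d → ℝ => u j * u j' * (u j * u j))
          = fun u : Fin d → ℝ => (fun t : ℝ => t * (t * t)) (u j) * (fun t : ℝ => t) (u j') := by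
        funext u; ring
      rw [h, rps_integral_two (gaussianReal 0 v) (fun t : ℝ => t * (t * t)) (fun t : ℝ => t) hjj, rps_gm3 hv, zero_mul]
    · by_cases hj'k : j' = k
      · subst hj'k
        have h : (fun u : Fin d → ℝ => u j * u j' * (u j' * u j'))
            = fun u : Fin d → ℝ => (fun t : ℝ => t) (u j) * (fun t : ℝ => t * (t * t)) (u j') := by
          funext u; ring
        rw [h, rps_integral_two (gaussianReal 0 v) (fun t : ℝ => t) (fun t : ℝ => t * (t * t)) hjj, rps_gm1 hv, zero_mul]
      · have h : (fun u : Fin d → ℝ => u j * u j' * (u k * u k))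
            = fun u : Fin d → ℝ =>
              (fun t : ℝ => t) (u j) * (fun t : ℝ => t) (u j') * (fun t : ℝ => t * t) (u k) := rfl
        rw [h, rps_integral_three (gaussianReal 0 v) (fun t : ℝ => t) (fun t : ℝ => t) (fun t : ℝ => t * t) hjj hjk hj'k, rps_gm1 hv]
        ring

lemma rps_mono_intble (j j' k : Fin d) :
    Integrable (fun u : Fin d → ℝ => u j * u j' * (u k * u k))
      (Measure.pi fun _ => gaussianReal 0 v) := by
  by_cases hjj : j = j'
  · subst hjj
    by_cases hjk : j = k
    · subst hjk
      exact rps_integrable_eval _ (rps_gi4 hv) j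
    · exact rps_integrable_two _ (rps_gi2 hv) (rps_gi2 hv) hjk
  · by_cases hjk : j = k
    · subst hjk
      have h : (fun u : Fin d → ℝ => u j * u j' * (u j * u j))
          = fun u : Fin d → ℝ => (fun t : ℝ => t * (t * t)) (u j) * (fun t : ℝ => t) (u j') := by
        funext u; ring
      rw [h]
      exact rps_integrable_two _ (rps_gi3 hv) (rps_gi1 hv) hjj
    · by_cases hj'k : j' = k
      · subst hj'k
        have h : (fun u : Fin d → ℝ => u j * u j' * (u j' * u j'))
            = fun u : Fin d → ℝ => (fun t : ℝ => t) (u j) * (fun t : ℝ => t * (t * t)) (u j') := by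
          funext u; ring
        rw [h]
        exact rps_integrable_two _ (rps_gi1 hv) (rps_gi3 hv) hjj
      · exact rps_integrable_three _ (rps_gi1 hv) (rps_gi1 hv) (rps_gi2 hv) hjj hjk hj'k

omit hv in
lemma rps_expand1 (k : Fin d) :
    (fun u : Fin d → ℝ => (∑ j, u j * g j) * u k)
      = fun u : Fin d → ℝ => ∑ j, g j * (u j * u k) := by
  funext u
  rw [Finset.sum_mul]
  exact Finset.sum_congr rfl fun j _ => by ring

lemma rps_S_intble (k : Fin d) :
    Integrable (fun u : Fin d → ℝ => (∑ j, u j * g j) * u k)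
      (Measure.pi fun _ => gaussianReal 0 v) := by
  rw [rps_expand1 g k]
  exact integrable_finset_sum _ fun j _ => (rps_intble_base2 hv j k).const_mul _

lemma rps_S_val (k : Fin d) :
    ∫ u : Fin d → ℝ, (∑ j, u j * g j) * u k ∂(Measure.pi fun _ => gaussianReal 0 v)
      = (v : ℝ) * g k := by
  rw [rps_expand1 g k,
    integral_finset_sum _ fun j _ => (rps_intble_base2 hv j k).const_mul _]
  have step : ∀ j : Fin d,
      (∫ u : Fin d → ℝ, g j * (u j * u k) ∂(Measure.pi fun _ => gaussianReal 0 v))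
        = if j = k then g j * (v : ℝ) else 0 := by
    intro j
    rw [integral_const_mul, rps_base2 hv]
    by_cases h : j = k <;> simp [h]
  rw [Finset.sum_congr rfl fun j _ => step j, Finset.sum_ite_eq' Finset.univ k]
  simp [mul_comm]

omit hv in
lemma rps_expand2 (k : Fin d) :
    (fun u : Fin d → ℝ => ((∑ j, u j * g j) * u k) ^ 2)
      = fun u : Fin d → ℝ => ∑ j, ∑ j', (g j * g j') * (u j * u j' * (u k * u k)) := by
  funext u
  rw [pow_two, show ((∑ j, u j * g j) * u k) * ((∑ j, u j * g j) * u k)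
      = ((∑ j, u j * g j) * (∑ j', u j' * g j')) * (u k * u k) by ring,
    Finset.sum_mul_sum, Finset.sum_mul]
  refine Finset.sum_congr rfl fun j _ => ?_
  rw [Finset.sum_mul]
  exact Finset.sum_congr rfl fun j' _ => by ring

lemma rps_T_intble (k : Fin d) :
    Integrable (fun u : Fin d → ℝ => ((∑ j, u j * g j) * u k) ^ 2)
      (Measure.pi fun _ => gaussianReal 0 v) := by
  rw [rps_expand2 g k]
  exact integrable_finset_sum _ fun j _ =>
    integrable_finset_sum _ fun j' _ => (rps_mono_intble hv j j' k).const_mul _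

lemma rps_T_val (k : Fin d) :
    ∫ u : Fin d → ℝ, ((∑ j, u j * g j) * u k) ^ 2 ∂(Measure.pi fun _ => gaussianReal 0 v)
      = (v : ℝ)^2 * (2 * (g k * g k) + ∑ j, g j * g j) := by
  rw [rps_expand2 g k,
    integral_finset_sum _ fun j _ =>
      integrable_finset_sum _ fun j' _ => (rps_mono_intble hv j j' k).const_mul _]
  have step : ∀ j : Fin d,
      (∫ u : Fin d → ℝ, ∑ j', (g j * g j') * (u j * u j' * (u k * u k))
          ∂(Measure.pi fun _ => gaussianReal 0 v))
        = (g j * g j) * (if j = k then 3 * (v:ℝ)^2 else (v:ℝ)^2) := by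
    intro j
    rw [integral_finset_sum _ fun j' _ => (rps_mono_intble hv j j' k).const_mul _]
    have inner : ∀ j' : Fin d,
        (∫ u : Fin d → ℝ, (g j * g j') * (u j * u j' * (u k * u k))
            ∂(Measure.pi fun _ => gaussianReal 0 v))
          = if j' = j then (g j * g j) * (if j = k then 3 * (v:ℝ)^2 else (v:ℝ)^2) else 0 := by
      intro j'
      rw [integral_const_mul, rps_mono_int hv j j' k]
      by_cases h : j = j'
      · subst h; simp
      · simp [h, Ne.symm h]
    rw [Finset.sum_congr rfl fun j' _ => inner j', Finset.sum_ite_eq' Finset.univ j]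
    simp
  rw [Finset.sum_congr rfl fun j _ => step j]
  have split : ∀ j : Fin d,
      (g j * g j) * (if j = k then 3 * (v:ℝ)^2 else (v:ℝ)^2)
        = (v:ℝ)^2 * (g j * g j) + (if j = k then 2 * (v:ℝ)^2 * (g j * g j) else 0) := by
    intro j
    by_cases h : j = k <;> simp [h] <;> ring
  rw [Finset.sum_congr rfl fun j _ => split j, Finset.sum_add_distrib,
    Finset.sum_ite_eq' Finset.univ k]
  simp [Finset.mul_sum]
  rw [← Finset.mul_sum]
  ring

end Level2

/-! ### Main theorem -/

/-- For i.i.d. `p₁, …, p_r ~ N(0, (1/r) I_d)` and fixed `g ∈ ℝ^d`,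
`E‖Σᵢ (pᵢᵀg) pᵢ‖² = ((d + r + 1)/r) ‖g‖²`; in particular it is at most
`(2d/r) ‖g‖²` whenever `r ≤ d − 1`. -/
theorem random_projection_second_moment {d r : ℕ} (hr : 0 < r) (g : Fin d → ℝ) :
    (∫ p : Fin r → Fin d → ℝ,
        ∑ k, (∑ i, (∑ j, p i j * g j) * p i k) ^ 2
        ∂(Measure.pi fun _ : Fin r =>
            Measure.pi fun _ : Fin d => gaussianReal 0 (r : NNReal)⁻¹))
      = (((d : ℝ) + r + 1) / r) * ∑ k, (g k) ^ 2 ∧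
    (r ≤ d - 1 →
      (∫ p : Fin r → Fin d → ℝ,
          ∑ k, (∑ i, (∑ j, p i j * g j) * p i k) ^ 2
          ∂(Measure.pi fun _ : Fin r =>
              Measure.pi fun _ : Fin d => gaussianReal 0 (r : NNReal)⁻¹))
        ≤ (2 * (d : ℝ) / r) * ∑ k, (g k) ^ 2) := by
  have hv : ((r : NNReal)⁻¹ : NNReal) ≠ 0 := by
    simp [hr.ne']
  set v : ℝ≥0 := (r : NNReal)⁻¹ with hv_def
  set ν : Measure (Fin d → ℝ) := Measure.pi fun _ => gaussianReal 0 v with hν_def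
  have hterm_eq : ∀ (k : Fin d) (i i' : Fin r),
      (∫ p : Fin r → Fin d → ℝ,
          ((∑ j, p i j * g j) * p i k) * ((∑ j, p i' j * g j) * p i' k)
          ∂(Measure.pi fun _ => ν))
        = if i = i' then (v:ℝ)^2 * (2 * (g k * g k) + ∑ j, g j * g j)
          else ((v:ℝ) * g k) * ((v:ℝ) * g k) := by
    intro k i i'
    by_cases hii : i = i'
    · subst hii
      rw [if_pos rfl]
      have h : (fun p : Fin r → Fin d → ℝ =>
          ((∑ j, p i j * g j) * p i k) * ((∑ j, p i j * g j) * p i k))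
          = fun p => (fun u : Fin d → ℝ => ((∑ j, u j * g j) * u k) ^ 2) (p i) := by
        funext p
        exact (pow_two _).symm
      rw [h, rps_integral_eval ν (fun u : Fin d → ℝ => ((∑ j, u j * g j) * u k) ^ 2) i, rps_T_val hv g k]
    · rw [if_neg hii]
      have h : (fun p : Fin r → Fin d → ℝ =>
          ((∑ j, p i j * g j) * p i k) * ((∑ j, p i' j * g j) * p i' k))
          = fun p => (fun u : Fin d → ℝ => (∑ j, u j * g j) * u k) (p i)
              * (fun u : Fin d → ℝ => (∑ j, u j * g j) * u k) (p i') := rfl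
      rw [h, rps_integral_two ν (fun u : Fin d → ℝ => (∑ j, u j * g j) * u k) (fun u : Fin d → ℝ => (∑ j, u j * g j) * u k) hii, rps_S_val hv g k]
  have hterm_intble : ∀ (k : Fin d) (i i' : Fin r),
      Integrable (fun p : Fin r → Fin d → ℝ =>
          ((∑ j, p i j * g j) * p i k) * ((∑ j, p i' j * g j) * p i' k))
        (Measure.pi fun _ => ν) := by
    intro k i i'
    by_cases hii : i = i'
    · subst hii
      have h : (fun p : Fin r → Fin d → ℝ =>
          ((∑ j, p i j * g j) * p i k) * ((∑ j, p i j * g j) * p i k))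
          = fun p => (fun u : Fin d → ℝ => ((∑ j, u j * g j) * u k) ^ 2) (p i) := by
        funext p
        exact (pow_two _).symm
      rw [h]
      exact rps_integrable_eval _ (rps_T_intble hv g k) i
    · exact rps_integrable_two _ (rps_S_intble hv g k) (rps_S_intble hv g k) hii
  have hexpand : ∀ k : Fin d,
      (fun p : Fin r → Fin d → ℝ => (∑ i, (∑ j, p i j * g j) * p i k) ^ 2)
        = fun p => ∑ i, ∑ i',
            ((∑ j, p i j * g j) * p i k) * ((∑ j, p i' j * g j) * p i' k) := by
    intro k
    funext p
    rw [pow_two, Finset.sum_mul_sum]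
  have hk_int : ∀ k : Fin d,
      Integrable (fun p : Fin r → Fin d → ℝ => (∑ i, (∑ j, p i j * g j) * p i k) ^ 2)
        (Measure.pi fun _ => ν) := by
    intro k
    rw [hexpand k]
    exact integrable_finset_sum _ fun i _ =>
      integrable_finset_sum _ fun i' _ => hterm_intble k i i'
  have hk_val : ∀ k : Fin d,
      (∫ p : Fin r → Fin d → ℝ, (∑ i, (∑ j, p i j * g j) * p i k) ^ 2
          ∂(Measure.pi fun _ => ν))
        = (r:ℝ) * (((v:ℝ)^2 * (2 * (g k * g k) + ∑ j, g j * g j))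
            + ((r:ℝ) - 1) * (((v:ℝ) * g k) * ((v:ℝ) * g k))) := by
    intro k
    rw [hexpand k,
      integral_finset_sum _ fun i _ =>
        integrable_finset_sum _ fun i' _ => hterm_intble k i i',
      Finset.sum_congr rfl fun i _ =>
        integral_finset_sum _ fun i' _ => hterm_intble k i i',
      Finset.sum_congr rfl fun i _ =>
        Finset.sum_congr rfl fun i' _ => hterm_eq k i i']
    have inner : ∀ i : Fin r,
        (∑ i' : Fin r, if i = i' then (v:ℝ)^2 * (2 * (g k * g k) + ∑ j, g j * g j)
            else ((v:ℝ) * g k) * ((v:ℝ) * g k))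
          = ((v:ℝ)^2 * (2 * (g k * g k) + ∑ j, g j * g j))
            + ((r:ℝ) - 1) * (((v:ℝ) * g k) * ((v:ℝ) * g k)) := by
      intro i
      rw [Finset.sum_congr rfl fun i' _ =>
        show (if i = i' then (v:ℝ)^2 * (2 * (g k * g k) + ∑ j, g j * g j)
            else ((v:ℝ) * g k) * ((v:ℝ) * g k))
          = ((v:ℝ) * g k) * ((v:ℝ) * g k)
            + (if i = i' then (v:ℝ)^2 * (2 * (g k * g k) + ∑ j, g j * g j)
                - ((v:ℝ) * g k) * ((v:ℝ) * g k) else 0)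
          by by_cases h : i = i' <;> simp [h]]
      rw [Finset.sum_add_distrib, Finset.sum_const, Finset.sum_ite_eq Finset.univ i,
        Finset.card_univ, Fintype.card_fin]
      simp only [Finset.mem_univ, if_pos, nsmul_eq_mul]
      ring
    rw [Finset.sum_congr rfl fun i _ => inner i, Finset.sum_const,
      Finset.card_univ, Fintype.card_fin, nsmul_eq_mul]
  have key : (∫ p : Fin r → Fin d → ℝ,
      ∑ k, (∑ i, (∑ j, p i j * g j) * p i k) ^ 2 ∂(Measure.pi fun _ => ν))
      = (((d : ℝ) + r + 1) / r) * ∑ k, (g k) ^ 2 := by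
    rw [integral_finset_sum _ fun k _ => hk_int k,
      Finset.sum_congr rfl fun k _ => hk_val k]
    have hAk : ∀ k : Fin d,
        (r:ℝ) * (((v:ℝ)^2 * (2 * (g k * g k) + ∑ j, g j * g j))
            + ((r:ℝ) - 1) * (((v:ℝ) * g k) * ((v:ℝ) * g k)))
          = ((r:ℝ) * (v:ℝ)^2 * ((r:ℝ) + 1)) * (g k * g k)
            + (r:ℝ) * (v:ℝ)^2 * ∑ j, g j * g j := by
      intro k
      ring
    rw [Finset.sum_congr rfl fun k _ => hAk k, Finset.sum_add_distrib,
      ← Finset.mul_sum, Finset.sum_const, Finset.card_univ, Fintype.card_fin,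
      nsmul_eq_mul]
    have hGm : (∑ j, g j * g j) = ∑ k, (g k) ^ 2 :=
      Finset.sum_congr rfl fun j _ => (pow_two _).symm
    have hvr : (v : ℝ) = ((r:ℝ))⁻¹ := by
      rw [hv_def]
      push_cast
      ring
    rw [hGm, hvr]
    have hr0 : (r:ℝ) ≠ 0 := by
      exact_mod_cast hr.ne'
    field_simp
    ring
  refine ⟨key, fun hrd => ?_⟩
  rw [key]
  have hS : 0 ≤ ∑ k, (g k) ^ 2 := Finset.sum_nonneg fun k _ => sq_nonneg _
  have hd : ((d : ℝ) + r + 1) ≤ 2 * d := by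
    have h1 : r + 1 ≤ d := by omega
    have h2 : (r:ℝ) + 1 ≤ d := by exact_mod_cast h1
    linarith
  apply mul_le_mul_of_nonneg_right _ hS
  apply div_le_div_of_nonneg_right hd
  exact_mod_cast Nat.zero_le r
end
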